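/- Let R: M × T M → M be defined by R(x, ξ) = P(x + ξ), where M is a smooth embedded submanifold of ℝⁿ, and P is a map defined on a neighborhood of M in ℝⁿ satisfying P(y) = y for y ∈ M and ‖y − P(y)‖ ≤ C · dist(y, M) for a constant C. Then R is a retraction on M: R(x, 0) = x and the differential of ξ ↦ R(x, ξ) at ξ = 0 is the identity on T_x M. -/

import Mathlib

/-- The tangent space of a set `S` at `p`: the span of velocities of smooth curves
through `p` inside `S`. -/
def tangentAt {N : ℕ} (S : Set (EuclideanSpace ℝ (Fin N))) (p : EuclideanSpace ℝ (Fin N)) :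
    Submodule ℝ (EuclideanSpace ℝ (Fin N)) :=
  Submodule.span ℝ {v | ∃ γ : ℝ → EuclideanSpace ℝ (Fin N),
    ContDiff ℝ (⊤ : ℕ∞) γ ∧ γ 0 = p ∧ (∀ t, γ t ∈ S) ∧ deriv γ 0 = v}

/-- A quasi-optimal projection onto an embedded submanifold induces a retraction:
if `P` maps into `M`, fixes `M`, is differentiable on `M` and is quasi-optimal
(`‖y − P y‖ ≤ C · dist(y, M)`), then `R(x, ξ) = P (x + ξ)` satisfies `R(x, 0) = x`
and its differential at `ξ = 0` is the identity on the tangent space `T_x M`. -/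
theorem stmt_19 {N : ℕ} (M : Set (EuclideanSpace ℝ (Fin N)))
    (P : EuclideanSpace ℝ (Fin N) → EuclideanSpace ℝ (Fin N)) (C : ℝ)
    (hrange : ∀ y, P y ∈ M)
    (hfix : ∀ y ∈ M, P y = y)
    (hquasi : ∀ y, ‖y - P y‖ ≤ C * Metric.infDist y M)
    (hdiff : ∀ x ∈ M, DifferentiableAt ℝ P x) :
    ∀ x ∈ M, P (x + 0) = x ∧
      ∀ v ∈ tangentAt M x, fderiv ℝ (fun ξ => P (x + ξ)) 0 v = v := by
  intro x hx
  refine ⟨by simpa using hfix x hx, ?_⟩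
  -- The map ξ ↦ P (x + ξ) has derivative fderiv ℝ P x at 0.
  have hPd : HasFDerivAt P (fderiv ℝ P x) x := (hdiff x hx).hasFDerivAt
  have hadd : HasFDerivAt (fun ξ : EuclideanSpace ℝ (Fin N) => x + ξ)
      (ContinuousLinearMap.id ℝ _) 0 := (hasFDerivAt_id 0).const_add x
  have hcomp : HasFDerivAt (fun ξ => P (x + ξ)) (fderiv ℝ P x) 0 := by
    have hPd' : HasFDerivAt P (fderiv ℝ P x) (x + 0) := by simpa using hPd
    have := (hPd'.comp 0 hadd :
      HasFDerivAt (fun ξ => P (x + ξ))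
        ((fderiv ℝ P x).comp (ContinuousLinearMap.id ℝ _)) 0)
    rw [ContinuousLinearMap.comp_id] at this; exact this
  rw [hcomp.fderiv]
  intro v hv
  -- it suffices to prove it on generators, since fderiv is linear
  induction hv using Submodule.span_induction with
  | mem w hw =>
    obtain ⟨γ, hγ, hγ0, hγM, hγd⟩ := hw
    have hγd' : HasDerivAt γ w 0 := by
      rw [← hγd]
      exact ((hγ.differentiable (by simp)) 0).hasDerivAt
    have hPd2 : HasFDerivAt P (fderiv ℝ P x) (γ 0) := hγ0 ▸ hPd
    have hPγ : HasDerivAt (P ∘ γ) (fderiv ℝ P x w) 0 :=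
      hPd2.comp_hasDerivAt 0 hγd'
    have heq : P ∘ γ = γ := funext fun t => hfix _ (hγM t)
    rw [heq] at hPγ
    exact hγd'.unique hPγ ▸ rfl
  | zero => simp
  | add a b _ _ ha hb => simp [ha, hb]
  | smul c a _ ha => simp [ha]
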